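/- Let q ≥ 2 and let a_1, ..., a_M be M sequences of length L with entries in ℤ_q such that the associated complex sequences ψ(a_1), ..., ψ(a_M), where ψ(a_λ) = (ζ_q^{a_{λ,1}}, ..., ζ_q^{a_{λ,L}}), form a Golay complementary set. Then for every λ ∈ {1, ..., M}, PMEPR(a_λ) ≤ M; that is, |S_{a_λ}(u)|² ≤ M · L for every u ∈ [0, 1]. -/

import Mathlib

/-!
Write `z = e^{2πiu}`. Expanding `|Σ_i x_i z^i|² = Σ_{i,j} x_i conj(x_j) z^{i-j}` and grouping the
terms by `τ = j - i` gives `Σ_τ ρ(x)(τ) z^{-τ}`. Summed over a complementary set, every `τ ≠ 0`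
cancels, so `Σ_λ |S_{a_λ}(u)|² = Σ_λ ρ(ψ_λ)(0) = M L`, the last step because the entries are
unimodular; each single term is then at most `M L`.
-/

/-- Aperiodic autocorrelation function of a length-`L` complex sequence
(indexed `0, ..., L-1`) at integer shift `τ`. -/
noncomputable def rho (L : ℕ) (a : ℕ → ℂ) (τ : ℤ) : ℂ :=
  if 0 ≤ τ ∧ τ < (L : ℤ) then
    ∑ i ∈ Finset.range (L - τ.toNat), a i * (starRingEnd ℂ) (a (i + τ.toNat))
  else if -(L : ℤ) < τ ∧ τ < 0 then
    ∑ i ∈ Finset.range (L - (-τ).toNat), a (i + (-τ).toNat) * (starRingEnd ℂ) (a i)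
  else 0

open Finset ComplexConjugate

theorem sum_filter_sub_eq_natCast {β : Type*} [AddCommMonoid β] (L n : ℕ)
    (f : ℕ × ℕ → β) :
    ∑ p ∈ (range L ×ˢ range L).filter (fun p => (p.2 : ℤ) - p.1 = n), f p =
      ∑ i ∈ range (L - n), f (i, i + n) := by
  refine sum_nbij' Prod.fst (fun i => (i, i + n)) ?_ ?_ ?_ (fun _ _ => rfl) ?_ <;>
    intro p hp <;> simp only [mem_filter, mem_product, mem_range] at hp ⊢
  · omega
  · push_cast; omega
  · exact Prod.ext rfl (by omega)
  · rw [show p = (p.1, p.1 + n) from Prod.ext rfl (by omega)]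

theorem sum_filter_sub_eq_neg_natCast {β : Type*} [AddCommMonoid β] (L n : ℕ)
    (f : ℕ × ℕ → β) :
    ∑ p ∈ (range L ×ˢ range L).filter (fun p => (p.2 : ℤ) - p.1 = -n), f p =
      ∑ i ∈ range (L - n), f (i + n, i) := by
  refine sum_nbij' Prod.snd (fun i => (i + n, i)) ?_ ?_ ?_ (fun _ _ => rfl) ?_ <;>
    intro p hp <;> simp only [mem_filter, mem_product, mem_range] at hp ⊢
  · omega
  · push_cast; omega
  · exact Prod.ext (by omega) rfl
  · rw [show p = (p.2 + n, p.2) from Prod.ext (by omega) rfl]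

section Autocorrelation

variable (L : ℕ) (x : ℕ → ℂ)

theorem rho_natCast (n : ℕ) :
    rho L x n = ∑ i ∈ range (L - n), x i * conj (x (i + n)) := by
  unfold rho
  by_cases hn : n < L
  · rw [if_pos (by omega)]
    simp
  · rw [if_neg (by omega), if_neg (by omega), Nat.sub_eq_zero_of_le (by omega), sum_range_zero]

theorem rho_neg_natCast (n : ℕ) :
    rho L x (-n) = ∑ i ∈ range (L - n), x (i + n) * conj (x i) := by
  rcases Nat.eq_zero_or_pos n with rfl | hn
  · simpa using rho_natCast L x 0
  unfold rho
  by_cases hnL : n < L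
  · rw [if_neg (by omega), if_pos (by omega)]
    simp
  · rw [if_neg (by omega), if_neg (by omega), Nat.sub_eq_zero_of_le (by omega), sum_range_zero]

theorem rho_eq_sum_filter (τ : ℤ) :
    rho L x τ = ∑ p ∈ (range L ×ˢ range L).filter (fun p => (p.2 : ℤ) - p.1 = τ),
      x p.1 * conj (x p.2) := by
  obtain ⟨n, rfl | rfl⟩ := Int.eq_nat_or_neg τ
  · rw [rho_natCast, sum_filter_sub_eq_natCast]
  · rw [rho_neg_natCast, sum_filter_sub_eq_neg_natCast]

theorem mul_conj_sum_mul_pow_eq_sum_rho {z : ℂ} (hz : ‖z‖ = 1) :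
    (∑ i ∈ range L, x i * z ^ i) * conj (∑ i ∈ range L, x i * z ^ i) =
      ∑ τ ∈ Ioo (-(L : ℤ)) L, rho L x τ * z ^ (-τ) := by
  have hz0 : z ≠ 0 := norm_ne_zero_iff.mp (hz ▸ one_ne_zero)
  have hconj : conj z = z⁻¹ := (Complex.inv_eq_conj hz).symm
  calc (∑ i ∈ range L, x i * z ^ i) * conj (∑ i ∈ range L, x i * z ^ i)
      = ∑ p ∈ range L ×ˢ range L, x p.1 * conj (x p.2) * z ^ ((p.1 : ℤ) - p.2) := by
        rw [map_sum, sum_mul_sum, sum_product]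
        refine sum_congr rfl fun i _ => sum_congr rfl fun j _ => ?_
        rw [map_mul, map_pow, hconj, zpow_sub₀ hz0, zpow_natCast, zpow_natCast, div_eq_mul_inv,
          inv_pow]
        ring
    _ = ∑ τ ∈ Ioo (-(L : ℤ)) L, ∑ p ∈ (range L ×ˢ range L).filter
          (fun p => (p.2 : ℤ) - p.1 = τ), x p.1 * conj (x p.2) * z ^ ((p.1 : ℤ) - p.2) := by
        refine (sum_fiberwise_of_maps_to (fun p hp => ?_) _).symm
        simp only [mem_product, mem_range] at hp
        simp only [mem_Ioo]
        omega
    _ = ∑ τ ∈ Ioo (-(L : ℤ)) L, rho L x τ * z ^ (-τ) := by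
        refine sum_congr rfl fun τ _ => ?_
        rw [rho_eq_sum_filter, sum_mul]
        refine sum_congr rfl fun p hp => ?_
        rw [← (mem_filter.mp hp).2, neg_sub]

theorem rho_zero : rho L x 0 = ∑ i ∈ range L, x i * conj (x i) := by
  simpa using rho_natCast L x 0

theorem rho_zero_of_forall_norm_eq_one (hx : ∀ i, ‖x i‖ = 1) : rho L x 0 = L := by
  simp [rho_zero, Complex.mul_conj', hx]

end Autocorrelation

theorem sum_mul_conj_eq_sum_rho_zero_of_complementary {ι : Type*} [Fintype ι] (L : ℕ)
    (x : ι → ℕ → ℂ) (hx : ∀ τ : ℤ, τ ≠ 0 → ∑ k, rho L (x k) τ = 0) {z : ℂ} (hz : ‖z‖ = 1) :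
    ∑ k, (∑ i ∈ range L, x k i * z ^ i) * conj (∑ i ∈ range L, x k i * z ^ i) =
      ∑ k, rho L (x k) 0 := by
  simp_rw [mul_conj_sum_mul_pow_eq_sum_rho _ _ hz]
  rw [sum_comm]
  simp_rw [← sum_mul]
  rw [sum_eq_single 0 (fun τ _ hτ => by rw [hx τ hτ, zero_mul]) (fun h0 => ?_), neg_zero,
    zpow_zero, mul_one]
  have hL : L = 0 := by simp only [mem_Ioo] at h0; omega
  simp [hL, rho_zero]

theorem pmepr_le_of_gcs_general (q L M : ℕ)
    (a : Fin M → ℕ → ZMod q)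
    (ψ : Fin M → ℕ → ℂ)
    (hψ : ∀ lam i, ψ lam i =
      Complex.exp (2 * Real.pi * Complex.I * ((a lam i).val : ℂ) / (q : ℂ)))
    (hGCS : ∀ τ : ℤ, τ ≠ 0 → ∑ lam : Fin M, rho L (ψ lam) τ = 0)
    (S : Fin M → ℝ → ℂ)
    (hS : ∀ lam u, S lam u = ∑ i ∈ Finset.range L,
      Complex.exp (2 * Real.pi * Complex.I * ((a lam i).val : ℂ) / (q : ℂ)) *
        Complex.exp (2 * Real.pi * Complex.I * (i : ℂ) * (u : ℂ))) :
    ∀ lam : Fin M, ∀ u : ℝ, 0 ≤ u → u ≤ 1 →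
      ‖S lam u‖ ^ 2 ≤ (M : ℝ) * (L : ℝ) := by
  intro lam u _ _
  set z := Complex.exp (2 * Real.pi * Complex.I * u)
  have hz : ‖z‖ = 1 := by simp [z, Complex.norm_exp]
  have hψ_norm : ∀ k i, ‖ψ k i‖ = 1 := fun k i => by simp [hψ, Complex.norm_exp]
  have hSz : ∀ k, S k u = ∑ i ∈ range L, ψ k i * z ^ i := fun k => by
    rw [hS]
    refine sum_congr rfl fun i _ => ?_
    rw [hψ, ← Complex.exp_nat_mul]
    ring_nf
  have hsum : ∑ k, (‖S k u‖ : ℂ) ^ 2 = M * L := by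
    simp_rw [← Complex.mul_conj', hSz, sum_mul_conj_eq_sum_rho_zero_of_complementary L ψ hGCS hz,
      rho_zero_of_forall_norm_eq_one L _ (hψ_norm _), sum_const, card_univ, Fintype.card_fin,
      nsmul_eq_mul]
  calc ‖S lam u‖ ^ 2 ≤ ∑ k, ‖S k u‖ ^ 2 :=
        single_le_sum (fun k _ => sq_nonneg ‖S k u‖) (mem_univ lam)
    _ = M * L := by exact_mod_cast hsum

/-- If the `ℤ_q`-valued sequences `a 0, ..., a (M-1)` of length `L` are such that the
associated complex sequences `ψ λ = (ζ_q ^ (a λ i))_{i<L}` form a Golay complementary set,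
then each sequence has PMEPR at most `M`: `|S_{a λ}(u)|² ≤ M·L` for all `u ∈ [0,1]`. -/
theorem pmepr_le_of_gcs (q L M : ℕ) (hq : 2 ≤ q)
    (a : Fin M → ℕ → ZMod q)
    (ψ : Fin M → ℕ → ℂ)
    (hψ : ∀ lam i, ψ lam i =
      Complex.exp (2 * Real.pi * Complex.I * ((a lam i).val : ℂ) / (q : ℂ)))
    (hGCS : ∀ τ : ℤ, τ ≠ 0 → ∑ lam : Fin M, rho L (ψ lam) τ = 0)
    (S : Fin M → ℝ → ℂ)
    (hS : ∀ lam u, S lam u = ∑ i ∈ Finset.range L,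
      Complex.exp (2 * Real.pi * Complex.I * ((a lam i).val : ℂ) / (q : ℂ)) *
        Complex.exp (2 * Real.pi * Complex.I * (i : ℂ) * (u : ℂ))) :
    ∀ lam : Fin M, ∀ u : ℝ, 0 ≤ u → u ≤ 1 →
      ‖S lam u‖ ^ 2 ≤ (M : ℝ) * (L : ℝ) :=
  pmepr_le_of_gcs_general q L M a ψ hψ hGCS S hS
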